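/- Let (X,d) be a compact metric space such that any two points of X are joined by a rectifiable path, i.e., a continuous map γ : [0,1] → X of finite length, the length being the total variation ℓ(γ) = sup { ∑_{i=1}^{n} d(γ(t_{i−1}), γ(t_i)) : 0 = t_0 < t_1 < ⋯ < t_n = 1 }. Then for every x,y ∈ X there exists a path from x to y whose length equals the infimum of the lengths of all paths from x to y. Consequently, defining d'(x,y) to be this infimum, (X,d') is a geodesic space: any two points are joined by a path whose length (computed with respect to d', and equal to its length with respect to d) equals d'(x,y). -/

import Mathlib

/-!
A rectifiable path of length `ℓ`, reparametrized proportionally to arc length, becomes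
`ℓ`-Lipschitz on `[0,1]`. Hence near-minimizing paths from `x` to `y` can be taken in the set of
`(d'(x,y) + 1)`-Lipschitz maps with these endpoints, a closed subset of the space `ℝ → X` of all
maps with the topology of pointwise convergence, which is compact by Tychonoff. Length is lower
semicontinuous for pointwise convergence, so it attains its infimum `d'(x,y)` on that set.
For a shortest path `γ`, `d'(γ a, γ b)` is at most the length of `γ` on `[a,b]`, so by
additivity of length its `d'`-length is at most its `d`-length `d'(x,y)`; the trivial partition
gives the reverse inequality.
-/

open Set
open scoped ENNReal

noncomputable section

namespace IntrinsicMetric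

/-- A continuous path on `[0,1]` from `x` to `y`. -/
def IsPath (X : Type*) [MetricSpace X] (γ : ℝ → X) (x y : X) : Prop :=
  ContinuousOn γ (Set.Icc 0 1) ∧ γ 0 = x ∧ γ 1 = y

/-- The total variation of `γ` on `s` computed with respect to an arbitrary
(extended-real-valued) distance function `D`. -/
def variationWith {X : Type*} (D : X → X → ℝ≥0∞) (γ : ℝ → X) (s : Set ℝ) : ℝ≥0∞ :=
  ⨆ p : ℕ × { u : ℕ → ℝ // Monotone u ∧ ∀ i, u i ∈ s },
    ∑ i ∈ Finset.range p.1, D (γ (p.2.1 i)) (γ (p.2.1 (i + 1)))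

/-- The intrinsic metric associated with `d`: the infimum of lengths of paths
from `x` to `y`. -/
def intrinsicDist (X : Type*) [MetricSpace X] (x y : X) : ℝ≥0∞ :=
  ⨅ γ : { γ : ℝ → X // IsPath X γ x y }, eVariationOn γ.1 (Set.Icc 0 1)

end IntrinsicMetric

open Filter Topology
open scoped NNReal

theorem continuousOn_variationOnFromTo {α E : Type*} [LinearOrder α] [TopologicalSpace α]
    [OrderTopology α] [PseudoMetricSpace E] {f : α → E} {s : Set α} {a : α} (ha : a ∈ s)
    (hf : LocallyBoundedVariationOn f s) (hc : ContinuousOn f s) :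
    ContinuousOn (variationOnFromTo f s a) s := by
  intro b hb
  have hfb : ∀ t ⊆ s, Tendsto f (𝓝[t] b) (𝓝 (f b)) := fun t ht =>
    (hc b hb).tendsto.mono_left (nhdsWithin_mono b ht)
  have hleft := variationOnFromTo.tendsto_left ha hb hf (hfb _ inter_subset_left)
  have hright := variationOnFromTo.tendsto_right ha hb hf (hfb _ inter_subset_left)
  rw [dist_self, sub_zero] at hleft
  rw [dist_self, add_zero] at hright
  have hs : s ⊆ insert b (s ∩ Iio b ∪ s ∩ Ioi b) := fun t ht => by
    rcases lt_trichotomy t b with h | rfl | h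
    exacts [Or.inr (Or.inl ⟨ht, h⟩), Or.inl rfl, Or.inr (Or.inr ⟨ht, h⟩)]
  exact (continuousWithinAt_insert_self.2
    (continuousWithinAt_union.2 ⟨hleft, hright⟩)).mono hs

theorem HasConstantSpeedOnWith.lipschitzOnWith {E : Type*} [PseudoEMetricSpace E] {f : ℝ → E}
    {s : Set ℝ} {l : ℝ≥0} (hf : HasConstantSpeedOnWith f s l) : LipschitzOnWith l f s := by
  have key : ∀ x ∈ s, ∀ y ∈ s, x ≤ y → edist (f x) (f y) ≤ l * edist x y := by
    intro x hx y hy hxy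
    calc edist (f x) (f y) ≤ eVariationOn f (s ∩ Icc x y) :=
          eVariationOn.edist_le f ⟨hx, le_rfl, hxy⟩ ⟨hy, hxy, le_rfl⟩
      _ = ENNReal.ofReal (l * (y - x)) := hf hx hy
      _ = l * edist x y := by
          rw [ENNReal.ofReal_mul l.coe_nonneg, ENNReal.ofReal_coe_nnreal, edist_comm,
            edist_dist, Real.dist_eq, abs_of_nonneg (sub_nonneg.2 hxy)]
  intro x hx y hy
  rcases le_total x y with hxy | hyx
  · exact key x hx y hy hxy
  · rw [edist_comm, edist_comm x]
    exact key y hy x hx hyx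

theorem LipschitzOnWith.eVariationOn_Icc_le {E : Type*} [PseudoEMetricSpace E] {f : ℝ → E}
    {K : ℝ≥0} {a b : ℝ} (hf : LipschitzOnWith K f (Icc a b)) :
    eVariationOn f (Icc a b) ≤ K * ENNReal.ofReal (b - a) := by
  simpa using hf.comp_eVariationOn_le (g := id) (mapsTo_id _)

theorem lowerSemicontinuous_eVariationOn {α E : Type*} [LinearOrder α] [PseudoEMetricSpace E]
    (s : Set α) : LowerSemicontinuous fun f : α → E => eVariationOn f s := fun f _ hv =>
  eVariationOn.lowerSemicontinuous_aux (F := id) (fun x _ => (continuous_apply x).tendsto f) hv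

theorem eVariationOn_Icc_eq_sum {α E : Type*} [LinearOrder α] [PseudoEMetricSpace E]
    (f : α → E) {u : ℕ → α} (hu : Monotone u) (n : ℕ) :
    eVariationOn f (Icc (u 0) (u n)) =
      ∑ i ∈ Finset.range n, eVariationOn f (Icc (u i) (u (i + 1))) := by
  induction n with
  | zero => simp [eVariationOn.subsingleton]
  | succ n ih =>
    rw [Finset.sum_range_succ, ← ih]
    simpa using (eVariationOn.Icc_add_Icc f (s := univ) (hu (Nat.zero_le n))
      (hu n.le_succ) (mem_univ _)).symm

theorem exists_lipschitzOnWith_reparametrization {E : Type*} [MetricSpace E] {γ : ℝ → E}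
    (hγ : ContinuousOn γ (Icc 0 1)) (hfin : eVariationOn γ (Icc 0 1) ≠ ⊤) :
    ∃ δ : ℝ → E, LipschitzOnWith (eVariationOn γ (Icc 0 1)).toNNReal δ (Icc 0 1) ∧
      δ 0 = γ 0 ∧ δ 1 = γ 1 := by
  set s : Set ℝ := Icc 0 1
  set ℓ : ℝ≥0 := (eVariationOn γ s).toNNReal
  have h0 : (0 : ℝ) ∈ s := left_mem_Icc.2 zero_le_one
  have h1 : (1 : ℝ) ∈ s := right_mem_Icc.2 zero_le_one
  have hbv : LocallyBoundedVariationOn γ s := BoundedVariationOn.locallyBoundedVariationOn hfin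
  set v := variationOnFromTo γ s 0
  have hv0 : v 0 = 0 := variationOnFromTo.self γ s 0
  have hv1 : v 1 = ℓ := by
    change variationOnFromTo γ s 0 1 = ℓ
    rw [variationOnFromTo.eq_of_le γ s zero_le_one, inter_self]
    rfl
  have hsurj : Icc 0 (ℓ : ℝ) ⊆ v '' s := by
    rw [← hv0, ← hv1]
    exact intermediate_value_Icc zero_le_one (continuousOn_variationOnFromTo h0 hbv hγ)
  set g := naturalParameterization γ s 0
  have hg : LipschitzOnWith 1 g (Icc 0 (ℓ : ℝ)) :=
    (has_unit_speed_naturalParameterization γ hbv h0).lipschitzOnWith.mono hsurj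
  have hgv : ∀ b ∈ s, g (v b) = γ b := fun b hb =>
    edist_eq_zero.1 (edist_naturalParameterization_eq_zero hbv h0 hb)
  have hscale : MapsTo (fun t : ℝ => (ℓ : ℝ) • t) s (Icc 0 (ℓ : ℝ)) := fun t ht =>
    ⟨mul_nonneg ℓ.coe_nonneg ht.1, mul_le_of_le_one_right ℓ.coe_nonneg ht.2⟩
  refine ⟨fun t => g ((ℓ : ℝ) • t), ?_, ?_, ?_⟩
  · have := hg.comp ((lipschitzWith_smul (ℓ : ℝ)).lipschitzOnWith (s := s)) hscale
    rw [one_mul, NNReal.nnnorm_eq] at this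
    exact this
  · simpa [hv0] using hgv 0 h0
  · simpa [hv1] using hgv 1 h1

namespace IntrinsicMetric

theorem le_variationWith {Y : Type*} (D : Y → Y → ℝ≥0∞) (γ : ℝ → Y) {s : Set ℝ} {a b : ℝ}
    (ha : a ∈ s) (hb : b ∈ s) (hab : a ≤ b) : D (γ a) (γ b) ≤ variationWith D γ s := by
  let u : ℕ → ℝ := fun i => if i = 0 then a else b
  have hu : Monotone u := fun i j hij => by
    dsimp only [u]
    split_ifs <;> first | exact le_rfl | exact hab | omega
  have hus : ∀ i, u i ∈ s := fun i => by
    dsimp only [u]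
    split_ifs
    exacts [ha, hb]
  exact le_iSup_of_le (⟨1, u, hu, hus⟩ : ℕ × { u : ℕ → ℝ // _ }) (by simp [u])

theorem variationWith_le_eVariationOn {Y : Type*} [PseudoEMetricSpace Y] {D : Y → Y → ℝ≥0∞}
    {γ : ℝ → Y} {s : Set ℝ} [s.OrdConnected]
    (hD : ∀ a ∈ s, ∀ b ∈ s, a ≤ b → D (γ a) (γ b) ≤ eVariationOn γ (Icc a b)) :
    variationWith D γ s ≤ eVariationOn γ s := by
  refine iSup_le fun ⟨n, u, hu, hus⟩ => ?_
  calc ∑ i ∈ Finset.range n, D (γ (u i)) (γ (u (i + 1)))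
      ≤ ∑ i ∈ Finset.range n, eVariationOn γ (Icc (u i) (u (i + 1))) :=
        Finset.sum_le_sum fun i _ => hD _ (hus i) _ (hus (i + 1)) (hu i.le_succ)
    _ = eVariationOn γ (Icc (u 0) (u n)) := (eVariationOn_Icc_eq_sum γ hu n).symm
    _ ≤ eVariationOn γ s := eVariationOn.mono γ (Set.Icc_subset s (hus 0) (hus n))

section

variable {X : Type*} [MetricSpace X]

theorem intrinsicDist_le_eVariationOn {γ : ℝ → X} {x y : X} (hγ : IsPath X γ x y) :
    intrinsicDist X x y ≤ eVariationOn γ (Icc 0 1) :=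
  iInf_le (fun γ : { γ : ℝ → X // IsPath X γ x y } => eVariationOn γ.1 (Icc 0 1)) ⟨γ, hγ⟩

theorem intrinsicDist_le_eVariationOn_Icc {γ : ℝ → X} {p q : ℝ} (hγ : ContinuousOn γ (Icc p q))
    (hpq : p ≤ q) : intrinsicDist X (γ p) (γ q) ≤ eVariationOn γ (Icc p q) := by
  let φ : ℝ → ℝ := fun r => p + r * (q - p)
  have hφ : MapsTo φ (Icc 0 1) (Icc p q) := fun r hr => by
    constructor <;> nlinarith [hr.1, hr.2]
  have hφmono : Monotone φ := fun r r' h => by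
    simp only [φ]
    nlinarith
  have hpath : IsPath X (γ ∘ φ) (γ p) (γ q) :=
    ⟨hγ.comp (by fun_prop) hφ, by simp [φ], by simp [φ]⟩
  exact (intrinsicDist_le_eVariationOn hpath).trans
    (eVariationOn.comp_le_of_monotoneOn γ φ (hφmono.monotoneOn _) hφ)

theorem variationWith_intrinsicDist_eq {γ : ℝ → X} {x y : X} (hγ : IsPath X γ x y)
    (hmin : eVariationOn γ (Icc 0 1) = intrinsicDist X x y) :
    variationWith (intrinsicDist X) γ (Icc 0 1) = intrinsicDist X x y := by
  refine le_antisymm ?_ ?_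
  · refine hmin ▸ variationWith_le_eVariationOn fun a ha b hb hab => ?_
    exact intrinsicDist_le_eVariationOn_Icc (hγ.1.mono (Icc_subset_Icc ha.1 hb.2)) hab
  · have := le_variationWith (intrinsicDist X) γ (left_mem_Icc.2 zero_le_one)
      (right_mem_Icc.2 zero_le_one) zero_le_one
    rwa [hγ.2.1, hγ.2.2] at this

theorem exists_lipschitzOnWith_isPath_eVariationOn_lt {x y : X} {c : ℝ≥0∞}
    (hc : intrinsicDist X x y < c) (hc_top : c ≠ ⊤) :
    ∃ γ : ℝ → X, LipschitzOnWith c.toNNReal γ (Icc 0 1) ∧ γ 0 = x ∧ γ 1 = y ∧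
      eVariationOn γ (Icc 0 1) < c := by
  obtain ⟨⟨γ, hγ⟩, hγc⟩ := iInf_lt_iff.1 hc
  obtain ⟨δ, hδ, hδ0, hδ1⟩ := exists_lipschitzOnWith_reparametrization hγ.1 hγc.ne_top
  refine ⟨δ, hδ.weaken (ENNReal.toNNReal_mono hc_top hγc.le), hδ0.trans hγ.2.1,
    hδ1.trans hγ.2.2, ?_⟩
  calc eVariationOn δ (Icc 0 1) ≤ (eVariationOn γ (Icc 0 1)).toNNReal * ENNReal.ofReal (1 - 0) :=
        hδ.eVariationOn_Icc_le
    _ = eVariationOn γ (Icc 0 1) := by simp [ENNReal.coe_toNNReal hγc.ne_top]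
    _ < c := hγc

theorem exists_isPath_eVariationOn_eq_intrinsicDist [CompactSpace X] {x y : X}
    (h : intrinsicDist X x y ≠ ⊤) :
    ∃ γ : ℝ → X, IsPath X γ x y ∧ eVariationOn γ (Icc 0 1) = intrinsicDist X x y := by
  set L := intrinsicDist X x y
  have hL1 : L + 1 ≠ ⊤ := ENNReal.add_ne_top.2 ⟨h, ENNReal.one_ne_top⟩
  set C : Set (ℝ → X) :=
    {γ | LipschitzOnWith (L + 1).toNNReal γ (Icc 0 1) ∧ γ 0 = x ∧ γ 1 = y}
  have hC : IsCompact C :=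
    ((isClosed_setOfPred_lipschitzOnWith _ _).inter ((isClosed_eq (continuous_apply 0)
      continuous_const).inter (isClosed_eq (continuous_apply 1) continuous_const))).isCompact
  have hnear : ∀ c, L < c → ∃ γ ∈ C, eVariationOn γ (Icc 0 1) < c := by
    intro c hc
    obtain ⟨γ, hγ, hγ0, hγ1, hγc⟩ := exists_lipschitzOnWith_isPath_eVariationOn_lt
      (lt_min hc (ENNReal.lt_add_right h one_ne_zero)) (min_le_right c _ |>.trans_lt hL1.lt_top).ne
    exact ⟨γ, ⟨hγ.weaken (ENNReal.toNNReal_mono hL1 (min_le_right _ _)), hγ0, hγ1⟩,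
      hγc.trans_le (min_le_left _ _)⟩
  obtain ⟨γ₀, hγ₀, -⟩ := hnear (L + 1) (ENNReal.lt_add_right h one_ne_zero)
  obtain ⟨γ, hγC, hγmin⟩ := ((lowerSemicontinuous_eVariationOn _).lowerSemicontinuousOn C
    ).exists_isMinOn ⟨γ₀, hγ₀⟩ hC
  have hγ : IsPath X γ x y := ⟨hγC.1.continuousOn, hγC.2⟩
  refine ⟨γ, hγ, le_antisymm (le_of_forall_gt fun c hc => ?_) (intrinsicDist_le_eVariationOn hγ)⟩
  obtain ⟨δ, hδC, hδc⟩ := hnear c hc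
  exact (hγmin hδC).trans_lt hδc

end

/-- In a compact metric space in which any two points are joined by a rectifiable path,
any two points are joined by a shortest path, whose length realizes the intrinsic
metric `d'`; consequently `(X, d')` is a geodesic space: this path's length computed
with respect to `d'` (which equals its length with respect to `d`) equals `d'(x,y)`. -/
theorem exists_shortest_path_and_intrinsic_geodesic (X : Type*) [MetricSpace X]
    [CompactSpace X]
    (hrect : ∀ x y : X, ∃ γ : ℝ → X, IsPath X γ x y ∧ eVariationOn γ (Set.Icc 0 1) ≠ ⊤) :
    ∀ x y : X, ∃ γ : ℝ → X, IsPath X γ x y ∧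
      eVariationOn γ (Set.Icc 0 1) = intrinsicDist X x y ∧
      variationWith (intrinsicDist X) γ (Set.Icc 0 1) = intrinsicDist X x y := by
  intro x y
  obtain ⟨γ₀, hγ₀, hfin⟩ := hrect x y
  obtain ⟨γ, hγ, hmin⟩ := exists_isPath_eVariationOn_eq_intrinsicDist
    ((intrinsicDist_le_eVariationOn hγ₀).trans_lt hfin.lt_top).ne
  exact ⟨γ, hγ, hmin, variationWith_intrinsicDist_eq hγ hmin⟩

end IntrinsicMetric
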